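/- arXiv:1209.5686 — 2 statements merged into one kernel-verified Lean document; each statement's English description precedes it below -/
import Mathlib

section
/- Let k be a field, A a commutative k-algebra and w ∈ A. Then on the bar modules A^{⊗(q+2)} (tensor powers over k) one has, for all q ≥ 0: (i) B_w ∘ B_w = 0, and (ii) b ∘ B_w + B_w ∘ b equals the map a₀⊗a₁⊗…⊗a_{q+1} ↦ (w·a₀)⊗a₁⊗…⊗a_{q+1} − a₀⊗a₁⊗…⊗(a_{q+1}·w). Consequently the completed bar complex with total differential ∂ = b + B_w satisfies ∂² = multiplication by w̃ = w⊗1 − 1⊗w through the outer two tensor factors, i.e. it is a w̃-curved module. -/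
open scoped TensorProduct
open PiTensorProduct

/-- The family obtained from `a : Fin (n+1) → A` by multiplying the `i`-th and `(i+1)`-st
entries together (the `i`-th term of the bar differential). -/
def mergeFam {A : Type*} [CommRing A] {n : ℕ} (a : Fin (n + 1) → A) (i : Fin n) :
    Fin n → A :=
  fun j =>
    if (j : ℕ) < (i : ℕ) then a j.castSucc
    else if (j : ℕ) = (i : ℕ) then a j.castSucc * a j.succ
    else a j.succ

/-- The family obtained from `a : Fin n → A` by inserting `w` between the `i`-th and
`(i+1)`-st entries (the `i`-th term of the insertion operator `B_w`). -/
def insWFam {A : Type*} [CommRing A] (w : A) {n : ℕ} (a : Fin n → A) (i : Fin (n - 1)) :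
    Fin (n + 1) → A :=
  fun j =>
    if h : (j : ℕ) ≤ (i : ℕ) then a ⟨j, by have hi := i.isLt; omega⟩
    else if h' : (j : ℕ) = (i : ℕ) + 1 then w
    else a ⟨(j : ℕ) - 1, by have hj := j.isLt; omega⟩

/-!
Both identities are proved by a sign-reversing involution. Expanding `B_w ∘ B_w` on a pure
tensor gives terms indexed by pairs `(i, j)`: inserting `w` after position `i` and then after
position `j ≤ i` is the same as inserting it after `j` and then after `i + 1`, and the two terms
carry opposite signs. In `b ∘ B_w + B_w ∘ b` the terms of `b ∘ B_w` in which the multiplication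
does not touch the inserted `w` cancel in the same way against the terms of `B_w ∘ b`; the
remaining ones multiply `w` into its left or right neighbour, with signs `+` and `-`, and
telescope to `w a₀ ⊗ ⋯ ⊗ a_{q+1} - a₀ ⊗ ⋯ ⊗ a_{q+1} w`.
-/

open Finset

section Families

variable {A : Type*} [CommRing A] (w : A)

theorem insWFam_insWFam_of_le {m : ℕ} (a : Fin (m + 1) → A) (i : Fin m) (j : Fin (m + 1))
    (h : (j : ℕ) ≤ i) :
    insWFam w (insWFam w a i) j = insWFam w (insWFam w a ⟨j, by omega⟩) i.succ := by
  funext p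
  simp only [insWFam, Fin.val_succ]
  split_ifs <;> grind

theorem mergeFam_insWFam_of_lt {q : ℕ} (a : Fin (q + 2) → A) (i : Fin (q + 1)) (j : Fin (q + 2))
    (h : (j : ℕ) < i) :
    mergeFam (insWFam w a i) j = insWFam w (mergeFam a ⟨j, by omega⟩) ⟨i - 1, by omega⟩ := by
  funext p
  simp only [mergeFam, insWFam, Fin.val_castSucc, Fin.val_succ, Fin.castSucc_mk, Fin.succ_mk]
  split_ifs <;> grind

theorem mergeFam_insWFam_of_gt {q : ℕ} (a : Fin (q + 2) → A) (i : Fin (q + 1)) (j : Fin (q + 2))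
    (h : (i : ℕ) + 1 < j) :
    mergeFam (insWFam w a i) j = insWFam w (mergeFam a ⟨j - 1, by omega⟩) ⟨i, by omega⟩ := by
  funext p
  simp only [mergeFam, insWFam, Fin.val_castSucc, Fin.val_succ, Fin.castSucc_mk, Fin.succ_mk]
  split_ifs <;> grind

theorem mergeFam_insWFam_castSucc {q : ℕ} (a : Fin (q + 2) → A) (i : Fin (q + 1)) :
    mergeFam (insWFam w a i) i.castSucc = Function.update a i.castSucc (a i.castSucc * w) := by
  funext p
  simp only [mergeFam, insWFam, Function.update_apply, Fin.ext_iff, Fin.val_castSucc,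
    Fin.val_succ]
  split_ifs <;> grind [Fin.ext_iff, Fin.val_castSucc]

theorem mergeFam_insWFam_succ {q : ℕ} (a : Fin (q + 2) → A) (i : Fin (q + 1)) :
    mergeFam (insWFam w a i) i.succ = Function.update a i.succ (w * a i.succ) := by
  funext p
  simp only [mergeFam, insWFam, Function.update_apply, Fin.ext_iff, Fin.val_castSucc,
    Fin.val_succ]
  split_ifs <;> grind [Fin.ext_iff, Fin.val_castSucc]

end Families

section AlternatingDoubleSums

variable {R M : Type*} [Ring R] [AddCommGroup M] [Module R M]

theorem neg_one_pow_smul_add_neg_one_pow_succ_smul (n : ℕ) (x : M) :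
    (-1 : R) ^ n • x + (-1 : R) ^ (n + 1) • x = 0 := by
  rw [pow_succ, mul_neg_one, neg_smul, add_neg_cancel]

theorem sum_castSucc_sub_succ {m : ℕ} (D : Fin (m + 1) → M) :
    ∑ i : Fin m, (D i.castSucc - D i.succ) = D 0 - D (Fin.last m) := by
  rw [sum_sub_distrib, sub_eq_sub_iff_add_eq_add]
  exact (Fin.sum_univ_castSucc D).symm.trans (Fin.sum_univ_succ D)

def pairSwap {m : ℕ} : Fin m × Fin (m + 1) → Fin m × Fin (m + 1)
  | (i, j) => if h : (j : ℕ) ≤ i then (⟨j, by omega⟩, i.succ) else (⟨j - 1, by omega⟩, i.castSucc)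

theorem pairSwap_of_le {m : ℕ} {i : Fin m} {j : Fin (m + 1)} (h : (j : ℕ) ≤ i) :
    pairSwap (i, j) = (⟨j, by omega⟩, i.succ) := dif_pos h

theorem pairSwap_of_lt {m : ℕ} {i : Fin m} {j : Fin (m + 1)} (h : (i : ℕ) < j) :
    pairSwap (i, j) = (⟨j - 1, by omega⟩, i.castSucc) := dif_neg (by omega)

theorem pairSwap_pairSwap {m : ℕ} (p : Fin m × Fin (m + 1)) : pairSwap (pairSwap p) = p := by
  obtain ⟨i, j⟩ := p
  rcases le_or_gt (j : ℕ) i with h | h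
  · rw [pairSwap_of_le h, pairSwap_of_lt (by simp; omega)]
    ext <;> simp
  · rw [pairSwap_of_lt h, pairSwap_of_le (by simp; omega)]
    ext <;> simp; omega

theorem sum_sum_neg_one_pow_smul_eq_zero {m : ℕ} (T : Fin m → Fin (m + 1) → M)
    (hT : ∀ (i : Fin m) (j : Fin (m + 1)) (h : (j : ℕ) ≤ i), T i j = T ⟨j, by omega⟩ i.succ) :
    ∑ i : Fin m, ∑ j : Fin (m + 1), (-1 : R) ^ ((i : ℕ) + j) • T i j = 0 := by
  rw [← Fintype.sum_prod_type']
  refine sum_ninvolution pairSwap (fun ⟨i, j⟩ => ?_) (fun ⟨i, j⟩ _ => ?_) (fun _ => mem_univ _)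
    pairSwap_pairSwap
  · rcases le_or_gt (j : ℕ) i with h | h
    · rw [pairSwap_of_le h]
      dsimp only
      rw [hT i j h, Fin.val_succ, show (j : ℕ) + (i + 1) = i + j + 1 by omega]
      exact neg_one_pow_smul_add_neg_one_pow_succ_smul _ _
    · have hT' : T ⟨j - 1, by omega⟩ i.castSucc = T i j := by
        rw [hT _ _ (by simp; omega)]
        congr 1
        ext
        simp
        omega
      rw [pairSwap_of_lt h]
      dsimp only
      rw [hT', Fin.val_castSucc, show (i : ℕ) + j = j - 1 + i + 1 by omega, add_comm]
      exact neg_one_pow_smul_add_neg_one_pow_succ_smul _ _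
  · rcases le_or_gt (j : ℕ) i with h | h
    · rw [pairSwap_of_le h]
      simp [Prod.ext_iff, Fin.ext_iff]
      omega
    · rw [pairSwap_of_lt h]
      simp [Prod.ext_iff, Fin.ext_iff]
      omega

def crossSwap {m : ℕ} :
    Fin (m + 1) × Fin (m + 2) ⊕ Fin (m + 1) × Fin m →
      Fin (m + 1) × Fin (m + 2) ⊕ Fin (m + 1) × Fin m
  | .inl (i, j) =>
    if h : (j : ℕ) < i then .inr (⟨j, by omega⟩, ⟨i - 1, by omega⟩)
    else if h' : (i : ℕ) + 1 < j then .inr (⟨j - 1, by omega⟩, ⟨i, by omega⟩)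
    else .inl (i, j)
  | .inr (j, i) => if (j : ℕ) ≤ i then .inl (i.succ, j.castSucc) else .inl (i.castSucc, j.succ)

theorem crossSwap_inl_of_lt {m : ℕ} {i : Fin (m + 1)} {j : Fin (m + 2)} (h : (j : ℕ) < i) :
    crossSwap (.inl (i, j)) = .inr (⟨j, by omega⟩, ⟨i - 1, by omega⟩) := dif_pos h

theorem crossSwap_inl_of_gt {m : ℕ} {i : Fin (m + 1)} {j : Fin (m + 2)} (h : (i : ℕ) + 1 < j) :
    crossSwap (.inl (i, j)) = .inr (⟨j - 1, by omega⟩, ⟨i, by omega⟩) :=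
  (dif_neg (by omega)).trans (dif_pos h)

theorem crossSwap_inl_of_le_of_le {m : ℕ} {i : Fin (m + 1)} {j : Fin (m + 2)} (h : (i : ℕ) ≤ j)
    (h' : (j : ℕ) ≤ i + 1) : crossSwap (.inl (i, j)) = .inl (i, j) :=
  (dif_neg (by omega)).trans (dif_neg (by omega))

theorem crossSwap_inr_of_le {m : ℕ} {j : Fin (m + 1)} {i : Fin m} (h : (j : ℕ) ≤ i) :
    crossSwap (.inr (j, i)) = .inl (i.succ, j.castSucc) := if_pos h

theorem crossSwap_inr_of_gt {m : ℕ} {j : Fin (m + 1)} {i : Fin m} (h : (i : ℕ) < j) :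
    crossSwap (.inr (j, i)) = .inl (i.castSucc, j.succ) := if_neg (by omega)

theorem crossSwap_crossSwap {m : ℕ} (x : Fin (m + 1) × Fin (m + 2) ⊕ Fin (m + 1) × Fin m) :
    crossSwap (crossSwap x) = x := by
  rcases x with ⟨i, j⟩ | ⟨j, i⟩
  · rcases lt_or_ge (j : ℕ) i with h | h
    · rw [crossSwap_inl_of_lt h, crossSwap_inr_of_le (by simp; omega)]
      simp [Fin.ext_iff]; omega
    rcases lt_or_ge ((i : ℕ) + 1) j with h' | h'
    · rw [crossSwap_inl_of_gt h', crossSwap_inr_of_gt (by simp; omega)]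
      simp [Fin.ext_iff]; omega
    · rw [crossSwap_inl_of_le_of_le h h', crossSwap_inl_of_le_of_le h h']
  · rcases le_or_gt (j : ℕ) i with h | h
    · rw [crossSwap_inr_of_le h, crossSwap_inl_of_lt (by simp; omega)]
      simp
    · rw [crossSwap_inr_of_gt h, crossSwap_inl_of_gt (by simp; omega)]
      simp

variable (R) in
def crossTerm {m : ℕ} (U : Fin (m + 1) → Fin (m + 2) → M) (V : Fin (m + 1) → Fin m → M) :
    Fin (m + 1) × Fin (m + 2) ⊕ Fin (m + 1) × Fin m → M :=
  Sum.elim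
    (fun p => if (p.1 : ℕ) ≤ p.2 ∧ (p.2 : ℕ) ≤ p.1 + 1 then 0
      else (-1 : R) ^ ((p.1 : ℕ) + p.2) • U p.1 p.2)
    (fun p => (-1 : R) ^ ((p.1 : ℕ) + p.2) • V p.1 p.2)

theorem sum_crossTerm_eq_zero {m : ℕ} (U : Fin (m + 1) → Fin (m + 2) → M)
    (V : Fin (m + 1) → Fin m → M)
    (hlt : ∀ (i : Fin (m + 1)) (j : Fin (m + 2)) (h : (j : ℕ) < i),
      U i j = V ⟨j, by omega⟩ ⟨i - 1, by omega⟩)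
    (hgt : ∀ (i : Fin (m + 1)) (j : Fin (m + 2)) (h : (i : ℕ) + 1 < j),
      U i j = V ⟨j - 1, by omega⟩ ⟨i, by omega⟩) :
    ∑ x, crossTerm R U V x = 0 := by
  have hinl : ∀ p, crossTerm R U V (.inl p) + crossTerm R U V (crossSwap (.inl p)) = 0 := by
    rintro ⟨i, j⟩
    rcases lt_or_ge (j : ℕ) i with h | h
    · rw [crossSwap_inl_of_lt h]
      simp only [crossTerm, Sum.elim_inl, Sum.elim_inr]
      rw [if_neg (by omega), hlt i j h, show (i : ℕ) + j = j + (i - 1) + 1 by omega, add_comm]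
      exact neg_one_pow_smul_add_neg_one_pow_succ_smul _ _
    rcases lt_or_ge ((i : ℕ) + 1) j with h' | h'
    · rw [crossSwap_inl_of_gt h']
      simp only [crossTerm, Sum.elim_inl, Sum.elim_inr]
      rw [if_neg (by omega), hgt i j h', show (i : ℕ) + j = j - 1 + i + 1 by omega, add_comm]
      exact neg_one_pow_smul_add_neg_one_pow_succ_smul _ _
    · rw [crossSwap_inl_of_le_of_le h h']
      simp [crossTerm, h, h']
  refine sum_ninvolution crossSwap (fun x => ?_) (fun x hx => ?_) (fun _ => mem_univ _)
    crossSwap_crossSwap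
  · rcases x with p | ⟨j, i⟩
    · exact hinl p
    -- the partner of a pair of the second kind is a pair of the first kind
    obtain ⟨p, hp⟩ : ∃ p, crossSwap (.inr (j, i)) = .inl p := by
      rcases le_or_gt (j : ℕ) i with h | h
      exacts [⟨_, crossSwap_inr_of_le h⟩, ⟨_, crossSwap_inr_of_gt h⟩]
    have := hinl p
    rwa [← hp, crossSwap_crossSwap, add_comm] at this
  · rcases x with ⟨i, j⟩ | ⟨j, i⟩
    · rcases lt_or_ge (j : ℕ) i with h | h
      · simp [crossSwap_inl_of_lt h]
      rcases lt_or_ge ((i : ℕ) + 1) j with h' | h'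
      · simp [crossSwap_inl_of_gt h']
      · simp [crossTerm, h, h'] at hx
    · rcases le_or_gt (j : ℕ) i with h | h
      · simp [crossSwap_inr_of_le h]
      · simp [crossSwap_inr_of_gt h]

theorem sum_neg_one_pow_smul_eq_sub_add_crossTerm {m : ℕ} (U : Fin (m + 1) → Fin (m + 2) → M)
    (V : Fin (m + 1) → Fin m → M) (D : Fin (m + 2) → M)
    (hcs : ∀ i, U i i.castSucc = D i.castSucc) (hsucc : ∀ i, U i i.succ = D i.succ)
    (i : Fin (m + 1)) :
    ∑ j : Fin (m + 2), (-1 : R) ^ ((i : ℕ) + j) • U i j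
      = (D i.castSucc - D i.succ) + ∑ j, crossTerm R U V (.inl (i, j)) := by
  have hne : i.castSucc ≠ i.succ := Fin.castSucc_lt_succ.ne
  have hterm : ∀ j : Fin (m + 2), (-1 : R) ^ ((i : ℕ) + j) • U i j =
      crossTerm R U V (.inl (i, j)) +
        (Pi.single i.castSucc (D i.castSucc) - Pi.single i.succ (D i.succ) : Fin (m + 2) → M) j := by
    intro j
    by_cases h₁ : j = i.castSucc
    · subst h₁
      simp [crossTerm, hcs, hne]
    by_cases h₂ : j = i.succ
    · subst h₂
      simp [crossTerm, hsucc, hne.symm, ← add_assoc, pow_succ]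
    · have : ¬((i : ℕ) ≤ j ∧ (j : ℕ) ≤ i + 1) := by
        simp only [Fin.ext_iff, Fin.val_castSucc, Fin.val_succ] at h₁ h₂
        omega
      simp [crossTerm, this, h₁, h₂]
  simp only [hterm, sum_add_distrib, Pi.sub_apply, sum_sub_distrib, sum_pi_single', mem_univ,
    if_true]
  abel

theorem sum_sum_neg_one_pow_smul_add_eq_sub {m : ℕ} (U : Fin (m + 1) → Fin (m + 2) → M)
    (V : Fin (m + 1) → Fin m → M) (D : Fin (m + 2) → M)
    (hlt : ∀ (i : Fin (m + 1)) (j : Fin (m + 2)) (h : (j : ℕ) < i),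
      U i j = V ⟨j, by omega⟩ ⟨i - 1, by omega⟩)
    (hgt : ∀ (i : Fin (m + 1)) (j : Fin (m + 2)) (h : (i : ℕ) + 1 < j),
      U i j = V ⟨j - 1, by omega⟩ ⟨i, by omega⟩)
    (hcs : ∀ i, U i i.castSucc = D i.castSucc) (hsucc : ∀ i, U i i.succ = D i.succ) :
    ∑ i : Fin (m + 1), ∑ j : Fin (m + 2), (-1 : R) ^ ((i : ℕ) + j) • U i j
      + ∑ j : Fin (m + 1), ∑ i : Fin m, (-1 : R) ^ ((j : ℕ) + i) • V j i
      = D 0 - D (Fin.last _) := by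
  calc _ = (D 0 - D (Fin.last _)) + ∑ x, crossTerm R U V x := by
        rw [Fintype.sum_sum_type, Fintype.sum_prod_type, Fintype.sum_prod_type]
        simp only [sum_neg_one_pow_smul_eq_sub_add_crossTerm U V D hcs hsucc, sum_add_distrib,
          sum_castSucc_sub_succ, add_assoc]
        rfl
    _ = D 0 - D (Fin.last _) := by rw [sum_crossTerm_eq_zero U V hlt hgt, add_zero]

end AlternatingDoubleSums

section BarComplex

variable {k A : Type*} [CommRing k] [CommRing A] [Module k A] (w : A)

theorem insertion_comp_insertion_eq_zero
    (B : ∀ n : ℕ, (⨂[k] (_ : Fin n), A) →ₗ[k] ⨂[k] (_ : Fin (n + 1)), A)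
    (hB : ∀ (n : ℕ) (a : Fin n → A),
      B n (tprod k a) = ∑ i : Fin (n - 1), ((-1 : k) ^ (i : ℕ)) • tprod k (insWFam w a i))
    (n : ℕ) : B (n + 1) ∘ₗ B n = 0 := by
  ext a
  obtain _ | m := n
  · simp [hB]
  · simp only [LinearMap.compMultilinearMap_apply, LinearMap.comp_apply, LinearMap.zero_apply,
      hB, map_sum, map_smul, smul_sum, smul_smul, ← pow_add]
    exact sum_sum_neg_one_pow_smul_eq_zero _
      fun i j h => congrArg (PiTensorProduct.tprod k) (insWFam_insWFam_of_le w a i j h)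

theorem bar_comp_insertion_add_insertion_comp_bar
    (b : ∀ n : ℕ, (⨂[k] (_ : Fin (n + 1)), A) →ₗ[k] ⨂[k] (_ : Fin n), A)
    (B : ∀ n : ℕ, (⨂[k] (_ : Fin n), A) →ₗ[k] ⨂[k] (_ : Fin (n + 1)), A)
    (hb : ∀ (n : ℕ) (a : Fin (n + 1) → A),
      b n (tprod k a) = ∑ i : Fin n, ((-1 : k) ^ (i : ℕ)) • tprod k (mergeFam a i))
    (hB : ∀ (n : ℕ) (a : Fin n → A),
      B n (tprod k a) = ∑ i : Fin (n - 1), ((-1 : k) ^ (i : ℕ)) • tprod k (insWFam w a i))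
    (q : ℕ) (a : Fin (q + 2) → A) :
    b (q + 2) (B (q + 2) (tprod k a)) + B (q + 1) (b (q + 1) (tprod k a))
      = tprod k (Function.update a 0 (w * a 0))
        - tprod k (Function.update a (Fin.last (q + 1)) (a (Fin.last (q + 1)) * w)) := by
  simp only [hb, hB, map_sum, map_smul, smul_sum, smul_smul, ← pow_add]
  rw [mul_comm _ w]
  exact sum_sum_neg_one_pow_smul_add_eq_sub _ _ (fun j => tprod k (Function.update a j (w * a j)))
    (fun i j h => congrArg (PiTensorProduct.tprod k) (mergeFam_insWFam_of_lt w a i j h))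
    (fun i j h => congrArg (PiTensorProduct.tprod k) (mergeFam_insWFam_of_gt w a i j h))
    (fun i => by rw [mergeFam_insWFam_castSucc, mul_comm])
    (fun i => congrArg (PiTensorProduct.tprod k) (mergeFam_insWFam_succ w a i))

end BarComplex

/-- On the bar modules `A^{⊗(q+2)}` (tensor powers over the field `k`),
the insertion operator `B_w` squares to zero, and `b ∘ B_w + B_w ∘ b` is the map
`a₀⊗a₁⊗⋯⊗a_{q+1} ↦ (w·a₀)⊗a₁⊗⋯⊗a_{q+1} − a₀⊗a₁⊗⋯⊗(a_{q+1}·w)`; consequently the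
completed bar complex with total differential `∂ = b + B_w` is a `w̃`-curved module. -/
theorem stmt_7 {k A : Type*} [Field k] [CommRing A] [Algebra k A] (w : A)
    (b : ∀ n : ℕ, (⨂[k] (_ : Fin (n + 1)), A) →ₗ[k] ⨂[k] (_ : Fin n), A)
    (B : ∀ n : ℕ, (⨂[k] (_ : Fin n), A) →ₗ[k] ⨂[k] (_ : Fin (n + 1)), A)
    (hb : ∀ (n : ℕ) (a : Fin (n + 1) → A),
      b n (tprod k a) = ∑ i : Fin n, ((-1 : k) ^ (i : ℕ)) • tprod k (mergeFam a i))
    (hB : ∀ (n : ℕ) (a : Fin n → A),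
      B n (tprod k a) = ∑ i : Fin (n - 1), ((-1 : k) ^ (i : ℕ)) • tprod k (insWFam w a i)) :
    (∀ n : ℕ, B (n + 1) ∘ₗ B n = 0) ∧
    (∀ (q : ℕ) (a : Fin (q + 2) → A),
      b (q + 2) (B (q + 2) (tprod k a)) + B (q + 1) (b (q + 1) (tprod k a))
        = tprod k (Function.update a 0 (w * a 0))
          - tprod k (Function.update a (Fin.last (q + 1)) (a (Fin.last (q + 1)) * w))) :=
  ⟨insertion_comp_insertion_eq_zero w B hB,
    bar_comp_insertion_add_insertion_comp_bar w b B hb hB⟩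
end

section
/- With A, w, I, J¹, Ω, m, γ, B_{dw} as in the context: for every q ≥ 0, on Ω^{⊗q} ⊗_A J¹ one has −(B_{dw} ∘ m ∘ γ + m ∘ γ ∘ B_{dw})(x) = x·(class of w⊗1 − 1⊗w), the product taken through the J¹ factor in the commutative ring J¹ = (A⊗_k A)/I². Equivalently, the folded Atiyah complex built from the modules Ω^{⊗q} ⊗_A J¹ with total differential B_{dw} − m∘γ squares to multiplication by w̃ = w⊗1 − 1⊗w, i.e. is a w̃-curved module. -/
/-!
Every summand of `B_{dw}` except the last inserts `dw` before the final slot, so `m` (which only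
reads the final slot) commutes with it up to the sign shift `(-1)^q`; the two composites thus
cancel except for the summand with `dw` last, which gives `(-1)^q μ(ξ) · (ω ⊗ ι(dw))`. In `J¹`
the class of `w ⊗ 1 - 1 ⊗ w` lies in `I/I²`, which is killed by `I`, so multiplying it by `ξ`
is the same as scaling it by `μ(ξ)`; and `ι(dw)` is exactly that class.
-/

open scoped TensorProduct
open PiTensorProduct

namespace Fin

variable {β : Type*} {n : ℕ}

theorem init_insertNth_castSucc (j : Fin (n + 1)) (x : β) (p : Fin (n + 1) → β) :
    init (insertNth (α := fun _ => β) j.castSucc x p) =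
      insertNth (α := fun _ => β) j x (init p) := by
  funext r
  rcases eq_or_ne r j with rfl | h
  · simp [init]
  · obtain ⟨s, rfl⟩ := exists_succAbove_eq h
    rw [insertNth_apply_succAbove, init, ← castSucc_succAbove_castSucc,
      insertNth_apply_succAbove, init]

theorem insertNth_castSucc_apply_last (j : Fin (n + 1)) (x : β) (p : Fin (n + 1) → β) :
    insertNth (α := fun _ => β) j.castSucc x p (last (n + 1)) = p (last n) := by
  rw [← succAbove_ne_last_last (castSucc_lt_last j).ne, insertNth_apply_succAbove]

end Fin

section FoldedAtiyah

variable {A M N : Type*} [CommRing A] [AddCommGroup M] [Module A M] [AddCommGroup N] [Module A N]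

/-- The map `m` of the folded Atiyah complex. -/
def IsLastSlotContraction (ι : M →ₗ[A] N) (μ : N →ₗ[A] A)
    (m : ∀ q : ℕ,
      ((⨂[A] (_ : Fin (q + 1)), M) ⊗[A] N) →ₗ[A] ((⨂[A] (_ : Fin q), M) ⊗[A] N)) : Prop :=
  ∀ (q : ℕ) (ω : Fin (q + 1) → M) (ξ : N),
    m q (tprod A ω ⊗ₜ[A] ξ) = μ ξ • (tprod A (Fin.init ω) ⊗ₜ[A] ι (ω (Fin.last q)))

/-- The map `B_d` of the folded Atiyah complex. -/
def IsAlternatingInsertion (d : M)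
    (B : ∀ q : ℕ,
      ((⨂[A] (_ : Fin q), M) ⊗[A] N) →ₗ[A] ((⨂[A] (_ : Fin (q + 1)), M) ⊗[A] N)) : Prop :=
  ∀ (q : ℕ) (ω : Fin q → M) (ξ : N),
    B q (tprod A ω ⊗ₜ[A] ξ) =
      ∑ i : Fin (q + 1),
        (-1 : A) ^ (i : ℕ) • (PiTensorProduct.tprod A (Fin.insertNth i d ω) ⊗ₜ[A] ξ)

variable {d : M} {ι : M →ₗ[A] N} {μ : N →ₗ[A] A}
  {m : ∀ q : ℕ, ((⨂[A] (_ : Fin (q + 1)), M) ⊗[A] N) →ₗ[A] ((⨂[A] (_ : Fin q), M) ⊗[A] N)}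
  {B : ∀ q : ℕ, ((⨂[A] (_ : Fin q), M) ⊗[A] N) →ₗ[A] ((⨂[A] (_ : Fin (q + 1)), M) ⊗[A] N)}

theorem IsLastSlotContraction.apply_insertNth_last (hm : IsLastSlotContraction ι μ m)
    (q : ℕ) (ω : Fin q → M) (ξ : N) :
    m q (PiTensorProduct.tprod A (Fin.insertNth (Fin.last q) d ω) ⊗ₜ[A] ξ) =
      μ ξ • (tprod A ω ⊗ₜ[A] ι d) := by
  rw [hm, Fin.insertNth_last', Fin.init_snoc, Fin.snoc_last]

theorem IsLastSlotContraction.apply_insertNth_castSucc (hm : IsLastSlotContraction ι μ m)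
    (q : ℕ) (j : Fin (q + 1)) (ω : Fin (q + 1) → M) (ξ : N) :
    m (q + 1) (PiTensorProduct.tprod A (Fin.insertNth j.castSucc d ω) ⊗ₜ[A] ξ) =
      μ ξ • (PiTensorProduct.tprod A (Fin.insertNth j d (Fin.init ω)) ⊗ₜ[A]
        ι (ω (Fin.last q))) := by
  rw [hm, Fin.init_insertNth_castSucc, Fin.insertNth_castSucc_apply_last]

theorem IsLastSlotContraction.apply_alternatingInsertion_zero (hm : IsLastSlotContraction ι μ m)
    (hB : IsAlternatingInsertion d B) (ω : Fin 0 → M) (ξ : N) :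
    m 0 (B 0 (tprod A ω ⊗ₜ[A] ξ)) = μ ξ • (tprod A ω ⊗ₜ[A] ι d) := by
  rw [hB, Fin.sum_univ_one, ← Fin.last_zero, Fin.val_last, pow_zero, one_smul,
    hm.apply_insertNth_last]

theorem IsLastSlotContraction.apply_alternatingInsertion_sub (hm : IsLastSlotContraction ι μ m)
    (hB : IsAlternatingInsertion d B) (q : ℕ) (ω : Fin (q + 1) → M) (ξ : N) :
    m (q + 1) (B (q + 1) (tprod A ω ⊗ₜ[A] ξ)) - B q (m q (tprod A ω ⊗ₜ[A] ξ)) =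
      (-1 : A) ^ (q + 1) • μ ξ • (tprod A ω ⊗ₜ[A] ι d) := by
  have h_commute : ∑ j : Fin (q + 1),
      m (q + 1) ((-1 : A) ^ (j.castSucc : ℕ) •
        (PiTensorProduct.tprod A (Fin.insertNth j.castSucc d ω) ⊗ₜ[A] ξ)) =
      B q (m q (tprod A ω ⊗ₜ[A] ξ)) := by
    simp only [map_smul, hm.apply_insertNth_castSucc, hm q ω ξ, hB q, Finset.smul_sum,
      Fin.val_castSucc, smul_comm (μ ξ)]
  rw [hB, map_sum, Fin.sum_univ_castSucc, h_commute, add_sub_cancel_left, map_smul,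
    hm.apply_insertNth_last, Fin.val_last]

end FoldedAtiyah

namespace KaehlerDifferential

variable {R S : Type*} [CommRing R] [CommRing S] [Algebra R S]

theorem sub_algebraMap_lmul'_mem_ideal (x : S ⊗[R] S) :
    x - algebraMap S (S ⊗[R] S) (Algebra.TensorProduct.lmul' R x) ∈ ideal R S := by
  simp [RingHom.mem_ker]

/-- `I/I²` is killed by `I`, so on it the two `S`-module structures of `S ⊗ S / I²` agree. -/
theorem mk_mul_mk_of_mem_ideal (x : S ⊗[R] S) {y : S ⊗[R] S} (hy : y ∈ ideal R S) :
    Ideal.Quotient.mk (ideal R S ^ 2) x * Ideal.Quotient.mk (ideal R S ^ 2) y =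
      Algebra.TensorProduct.lmul' R x • Ideal.Quotient.mk (ideal R S ^ 2) y := by
  rw [Algebra.smul_def, IsScalarTower.algebraMap_apply S (S ⊗[R] S),
    Ideal.Quotient.algebraMap_eq, ← map_mul, ← map_mul, Ideal.Quotient.eq, ← sub_mul, pow_two]
  exact Ideal.mul_mem_mul (sub_algebraMap_lmul'_mem_ideal x) hy

theorem apply_mk_eq_lmul' (μ : ((S ⊗[R] S) ⧸ ideal R S ^ 2) →ₗ[S] S)
    (hμ : ∀ a b : S, μ (Ideal.Quotient.mk (ideal R S ^ 2) (a ⊗ₜ[R] b)) = a * b) (x : S ⊗[R] S) :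
    μ (Ideal.Quotient.mk (ideal R S ^ 2) x) = Algebra.TensorProduct.lmul' R x := by
  induction x using TensorProduct.induction_on with
  | zero => simp
  | tmul a b => rw [hμ, Algebra.TensorProduct.lmul'_apply_tmul]
  | add a b ha hb => rw [map_add, map_add, ha, hb, map_add]

end KaehlerDifferential

/-- Let `I = ker(A ⊗_k A → A)`, `J¹ = (A ⊗_k A)/I²`, and consider the
folded Atiyah complex with components `Ω^{⊗q} ⊗_A J¹`, where `m` is induced by the
multiplication `J¹ → A` followed by `Ω ≅ I/I² ↪ J¹` in the last slot, and `B_{dw}` inserts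
`dw` with alternating signs.  Then `−(B_{dw} ∘ m ∘ γ + m ∘ γ ∘ B_{dw})(x) = x · [w⊗1 − 1⊗w]`
(the product taken through the `J¹` factor), i.e. the total differential `B_{dw} − m∘γ`
squares to multiplication by `w̃`, so the folded Atiyah complex is a `w̃`-curved module.
Equivalently, `(−1)^q (m (B_{dw} x) − B_{dw} (m x)) = x · [w⊗1 − 1⊗w]` on `Ω^{⊗q} ⊗_A J¹`
(with `m := 0` for `q = 0`), which is what is stated below, separately for `q = 0` and
for `q + 1`. -/
theorem stmt_9 {k A : Type*} [Field k] [CommRing A] [Algebra k A] (w : A)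
    (ι : Ω[A⁄k] →ₗ[A] ((A ⊗[k] A) ⧸ (KaehlerDifferential.ideal k A ^ 2)))
    (hι : ∀ a : A,
      ι (KaehlerDifferential.D k A a)
        = Ideal.Quotient.mk (KaehlerDifferential.ideal k A ^ 2)
            (a ⊗ₜ[k] (1 : A) - (1 : A) ⊗ₜ[k] a))
    (μ : ((A ⊗[k] A) ⧸ (KaehlerDifferential.ideal k A ^ 2)) →ₗ[A] A)
    (hμ : ∀ x y : A,
      μ (Ideal.Quotient.mk (KaehlerDifferential.ideal k A ^ 2) (x ⊗ₜ[k] y)) = x * y)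
    (m : ∀ q : ℕ,
      ((⨂[A] (_ : Fin (q + 1)), Ω[A⁄k]) ⊗[A]
          ((A ⊗[k] A) ⧸ (KaehlerDifferential.ideal k A ^ 2))) →ₗ[A]
        ((⨂[A] (_ : Fin q), Ω[A⁄k]) ⊗[A]
          ((A ⊗[k] A) ⧸ (KaehlerDifferential.ideal k A ^ 2))))
    (hm : ∀ (q : ℕ) (ω : Fin (q + 1) → Ω[A⁄k])
        (ξ : (A ⊗[k] A) ⧸ (KaehlerDifferential.ideal k A ^ 2)),
      m q ((tprod A ω) ⊗ₜ[A] ξ)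
        = μ ξ • ((tprod A (fun i : Fin q => ω i.castSucc)) ⊗ₜ[A] ι (ω (Fin.last q))))
    (B : ∀ q : ℕ,
      ((⨂[A] (_ : Fin q), Ω[A⁄k]) ⊗[A]
          ((A ⊗[k] A) ⧸ (KaehlerDifferential.ideal k A ^ 2))) →ₗ[A]
        ((⨂[A] (_ : Fin (q + 1)), Ω[A⁄k]) ⊗[A]
          ((A ⊗[k] A) ⧸ (KaehlerDifferential.ideal k A ^ 2))))
    (hB : ∀ (q : ℕ) (ω : Fin q → Ω[A⁄k])
        (ξ : (A ⊗[k] A) ⧸ (KaehlerDifferential.ideal k A ^ 2)),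
      B q ((tprod A ω) ⊗ₜ[A] ξ)
        = ∑ i : Fin (q + 1), ((-1 : A) ^ (i : ℕ)) •
            ((PiTensorProduct.tprod A (i.insertNth (KaehlerDifferential.D k A w) ω)) ⊗ₜ[A] ξ)) :
    (∀ ξ : (A ⊗[k] A) ⧸ (KaehlerDifferential.ideal k A ^ 2),
      m 0 (B 0 ((tprod A (fun i : Fin 0 => i.elim0)) ⊗ₜ[A] ξ))
        = (PiTensorProduct.tprod A (fun i : Fin 0 => i.elim0)) ⊗ₜ[A]
            (ξ * Ideal.Quotient.mk (KaehlerDifferential.ideal k A ^ 2)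
              (w ⊗ₜ[k] (1 : A) - (1 : A) ⊗ₜ[k] w))) ∧
    (∀ (q : ℕ) (ω : Fin (q + 1) → Ω[A⁄k])
        (ξ : (A ⊗[k] A) ⧸ (KaehlerDifferential.ideal k A ^ 2)),
      ((-1 : A) ^ (q + 1)) •
          (m (q + 1) (B (q + 1) ((tprod A ω) ⊗ₜ[A] ξ))
            - B q (m q ((tprod A ω) ⊗ₜ[A] ξ)))
        = (tprod A ω) ⊗ₜ[A]
            (ξ * Ideal.Quotient.mk (KaehlerDifferential.ideal k A ^ 2)
              (w ⊗ₜ[k] (1 : A) - (1 : A) ⊗ₜ[k] w))) := by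
  have hw : w ⊗ₜ[k] (1 : A) - (1 : A) ⊗ₜ[k] w ∈ KaehlerDifferential.ideal k A := by
    simp [RingHom.mem_ker]
  have curvature : ∀ {n : ℕ} (t : ⨂[A] (_ : Fin n), Ω[A⁄k])
      (ξ : (A ⊗[k] A) ⧸ (KaehlerDifferential.ideal k A ^ 2)),
      μ ξ • (t ⊗ₜ[A] ι (KaehlerDifferential.D k A w)) =
        t ⊗ₜ[A] (ξ * Ideal.Quotient.mk (KaehlerDifferential.ideal k A ^ 2)
          (w ⊗ₜ[k] (1 : A) - (1 : A) ⊗ₜ[k] w)) := by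
    intro n t ξ
    obtain ⟨x, rfl⟩ := Ideal.Quotient.mk_surjective ξ
    rw [hι, KaehlerDifferential.mk_mul_mk_of_mem_ideal x hw,
      KaehlerDifferential.apply_mk_eq_lmul' μ hμ, ← TensorProduct.tmul_smul]
  have hm : IsLastSlotContraction ι μ m := hm
  refine ⟨fun ξ => ?_, fun q ω ξ => ?_⟩
  · rw [hm.apply_alternatingInsertion_zero hB, curvature]
  · rw [hm.apply_alternatingInsertion_sub hB, smul_smul, ← pow_add,
      (Even.add_self (q + 1)).neg_one_pow, one_smul, curvature]
end
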